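/- arXiv:math/0309436 — 2 statements merged into one kernel-verified Lean document; each statement's English description precedes it below -/
import Mathlib

section
/- Fix integers 1 ≤ k ≤ n, set m = n − k, and let λ, μ be partitions in the k×m box. Let F be the standard flag and F̃ the opposite flag of ℂ^n. Then the intersection Ω_λ(F) ∩ Ω_μ(F̃) is nonempty if and only if λ_i + μ_{k+1−i} ≤ m for all 1 ≤ i ≤ k (equivalently, if and only if the Young diagram of λ is contained in that of μ^∨). -/
/-- The coordinate subspace of `ℂ^n` spanned by the standard basis vectors `e_j`, `j ∈ s`. -/
noncomputable def coordSub (n : ℕ) (s : Set (Fin n)) : Submodule ℂ (Fin n → ℂ) :=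
  Submodule.span ℂ ((fun j => Pi.single j (1 : ℂ)) '' s)

/-- The standard flag of `ℂ^n`: `stdFlag n i = span(e_1, …, e_{i+1})` (0-indexed `i`,
so `stdFlag n i` has dimension `i + 1`). -/
noncomputable def stdFlag (n : ℕ) (i : Fin n) : Submodule ℂ (Fin n → ℂ) :=
  coordSub n {j | j ≤ i}

/-- The opposite flag of `ℂ^n`: `oppFlag n i` is the span of the last `i + 1` standard
basis vectors (0-indexed `i`, so `oppFlag n i` has dimension `i + 1`). -/
noncomputable def oppFlag (n : ℕ) (i : Fin n) : Submodule ℂ (Fin n → ℂ) :=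
  coordSub n {j | n ≤ j.val + i.val + 1}

/-- The jump positions of a sequence `lam` in the `k × (n-k)` box, as indices into a
complete flag of `ℂ^n`: `posIdx n k hk lam j` is the 0-indexed position whose
1-indexed value is `p_j(lam) = (n-k) + (j+1) - lam j`. -/
def posIdx (n k : ℕ) (hk : k ≤ n) (lam : Fin k → ℕ) (j : Fin k) : Fin n :=
  ⟨(n - k) + j.val - lam j, by have := j.isLt; omega⟩

/-- Membership of a subspace `L` in the Schubert variety `Ω_lam(G)` for a complete flag
`G` of `ℂ^n` (where `G i` has dimension `i + 1`): `dim (L ⊓ G (p_j lam)) ≥ j` for all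
`j = 1, …, k` (1-indexed). -/
def inSchubert (n k : ℕ) (hk : k ≤ n) (G : Fin n → Submodule ℂ (Fin n → ℂ))
    (lam : Fin k → ℕ) (L : Submodule ℂ (Fin n → ℂ)) : Prop :=
  ∀ j : Fin k, j.val + 1 ≤ Module.finrank ℂ ↥(L ⊓ G (posIdx n k hk lam j))

/-- The coordinate subspace `E_lam = span(e_{p_1(lam)}, …, e_{p_k(lam)})` of `ℂ^n`. -/
noncomputable def coordE (n k : ℕ) (hk : k ≤ n) (lam : Fin k → ℕ) :
    Submodule ℂ (Fin n → ℂ) :=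
  coordSub n (Set.range (posIdx n k hk lam))

/-- The dual of a sequence `lam` in the `k × m` box. -/
def boxDual (k m : ℕ) (lam : Fin k → ℕ) : Fin k → ℕ :=
  fun i => m - lam i.rev

/-
If `λ_i + μ_{k+1-i} > m` then the coordinate spaces `F_{p_i(λ)}` and `F̃_{p_{k+1-i}(μ)}` are
disjoint, so any `L` in both Schubert varieties would meet them in subspaces of dimensions `i`
and `k + 1 - i` with trivial intersection, forcing `dim L ≥ k + 1`. Conversely, when the
inequalities hold, the coordinate subspace `E_λ = span(e_{p_1(λ)}, …, e_{p_k(λ)})` lies in both: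
it contains `e_{p_1(λ)}, …, e_{p_j(λ)} ∈ F_{p_j(λ)}` and, since `p_{k+1-j}(λ) + p_j(μ) > n`,
also `e_{p_{k+1-j}(λ)}, …, e_{p_k(λ)} ∈ F̃_{p_j(μ)}`.
-/

theorem Submodule.finrank_inf_add_finrank_inf_le {K V : Type*} [DivisionRing K] [AddCommGroup V]
    [Module K V] [FiniteDimensional K V] (L : Submodule K V) {A B : Submodule K V}
    (hAB : Disjoint A B) :
    Module.finrank K ↥(L ⊓ A) + Module.finrank K ↥(L ⊓ B) ≤ Module.finrank K L := by
  rw [← Submodule.finrank_sup_add_finrank_inf_eq,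
    (hAB.mono inf_le_right inf_le_right).eq_bot, finrank_bot, add_zero]
  exact Submodule.finrank_mono (sup_le inf_le_left inf_le_left)

section CoordSub

variable {n : ℕ}

theorem finrank_coordSub (s : Finset (Fin n)) :
    Module.finrank ℂ (coordSub n s) = s.card := by
  rw [coordSub, Set.image_eq_range]
  exact (finrank_span_eq_card ((Pi.linearIndependent_single_one (Fin n) ℂ).comp _
    Subtype.val_injective)).trans (Fintype.card_coe s)

theorem coordSub_mono {s t : Set (Fin n)} (h : s ⊆ t) : coordSub n s ≤ coordSub n t :=
  Submodule.span_mono (Set.image_mono h)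

theorem apply_eq_zero_of_mem_coordSub {s : Set (Fin n)} {f : Fin n → ℂ}
    (hf : f ∈ coordSub n s) {j : Fin n} (hj : j ∉ s) : f j = 0 := by
  induction hf using Submodule.span_induction with
  | mem x hx =>
    obtain ⟨j', hj', rfl⟩ := hx
    exact Pi.single_eq_of_ne (fun h : j = j' => hj (h ▸ hj')) 1
  | zero => rfl
  | add x y _ _ hx hy => simp [hx, hy]
  | smul a x _ hx => simp [hx]

theorem disjoint_coordSub {s t : Set (Fin n)} (hst : Disjoint s t) :
    Disjoint (coordSub n s) (coordSub n t) := by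
  rw [Submodule.disjoint_def]
  intro f hs ht
  funext j
  by_cases hj : j ∈ s
  · exact apply_eq_zero_of_mem_coordSub ht (hst.notMem_of_mem_left hj)
  · exact apply_eq_zero_of_mem_coordSub hs hj

theorem card_le_finrank_coordSub_range_inf {k : ℕ} {pos : Fin k → Fin n}
    (hpos : Function.Injective pos) {t : Set (Fin n)} (S : Finset (Fin k))
    (hS : ∀ a ∈ S, pos a ∈ t) :
    S.card ≤ Module.finrank ℂ ↥(coordSub n (Set.range pos) ⊓ coordSub n t) := by
  classical
  calc S.card = (S.image pos).card := (Finset.card_image_of_injective S hpos).symm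
    _ = Module.finrank ℂ (coordSub n (S.image pos : Finset (Fin n))) :=
        (finrank_coordSub _).symm
    _ ≤ _ := by
      refine Submodule.finrank_mono (le_inf (coordSub_mono ?_) (coordSub_mono ?_))
      · simp [Set.image_subset_iff]
      · simpa [Set.subset_def] using hS

theorem disjoint_stdFlag_oppFlag {p q : Fin n} (hpq : p.val + q.val + 1 < n) :
    Disjoint (stdFlag n p) (oppFlag n q) := by
  refine disjoint_coordSub (Set.disjoint_left.2 fun j (hj : j ≤ p) (hj' : n ≤ _) => ?_)
  have : j.val ≤ p.val := hj
  omega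

end CoordSub

section Schubert

variable {n k : ℕ} {hk : k ≤ n} {lam mu : Fin k → ℕ}

@[simp]
theorem val_posIdx (j : Fin k) : (posIdx n k hk lam j : ℕ) = n - k + j - lam j := rfl

theorem posIdx_strictMono (hanti : Antitone lam) (hbd : ∀ i, lam i ≤ n - k) :
    StrictMono (posIdx n k hk lam) := by
  intro a b hab
  have := hanti hab.le
  have := hbd a
  have : a.val < b.val := hab
  rw [Fin.lt_def, val_posIdx, val_posIdx]
  omega

theorem add_le_of_inSchubert_stdFlag_oppFlag {L : Submodule ℂ (Fin n → ℂ)}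
    (hL : Module.finrank ℂ L = k) (hstd : inSchubert n k hk (stdFlag n) lam L)
    (hopp : inSchubert n k hk (oppFlag n) mu L) (hlam : ∀ i, lam i ≤ n - k)
    (hmu : ∀ i, mu i ≤ n - k) (i : Fin k) : lam i + mu i.rev ≤ n - k := by
  by_contra! hcon
  have hrev : (i.rev : ℕ) = k - (i + 1) := Fin.val_rev i
  have hdisj : Disjoint (stdFlag n (posIdx n k hk lam i)) (oppFlag n (posIdx n k hk mu i.rev)) :=
    disjoint_stdFlag_oppFlag (by simp only [val_posIdx]; grind)
  have hdimL := L.finrank_inf_add_finrank_inf_le hdisj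
  have hdim_std := hstd i
  have hdim_opp := hopp i.rev
  omega

theorem finrank_coordE (hanti : Antitone lam) (hbd : ∀ i, lam i ≤ n - k) :
    Module.finrank ℂ (coordE n k hk lam) = k := by
  classical
  rw [coordE, ← Set.image_univ, ← Finset.coe_univ, ← Finset.coe_image, finrank_coordSub,
    Finset.card_image_of_injective _ (posIdx_strictMono hanti hbd).injective, Finset.card_fin]

theorem coordE_inSchubert_stdFlag (hanti : Antitone lam) (hbd : ∀ i, lam i ≤ n - k) :
    inSchubert n k hk (stdFlag n) lam (coordE n k hk lam) := by
  intro j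
  have hmono := posIdx_strictMono (hk := hk) hanti hbd
  rw [← Fin.card_Iic]
  exact card_le_finrank_coordSub_range_inf hmono.injective _
    fun a ha => hmono.monotone (Finset.mem_Iic.1 ha)

theorem coordE_inSchubert_oppFlag (hanti : Antitone lam) (hbd : ∀ i, lam i ≤ n - k)
    (hmu : ∀ i, mu i ≤ n - k) (hsum : ∀ i, lam i + mu i.rev ≤ n - k) :
    inSchubert n k hk (oppFlag n) mu (coordE n k hk lam) := by
  intro j
  have hmono := posIdx_strictMono (hk := hk) hanti hbd
  have hcard : (Finset.Ici j.rev).card = j + 1 := by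
    rw [Fin.card_Ici, Fin.val_rev]; omega
  rw [← hcard]
  refine card_le_finrank_coordSub_range_inf hmono.injective _ fun a ha => ?_
  have hle : (posIdx n k hk lam j.rev : ℕ) ≤ posIdx n k hk lam a :=
    hmono.monotone (Finset.mem_Ici.1 ha)
  have hsum_j : lam j.rev + mu j ≤ n - k := by simpa using hsum j.rev
  have hmu_j := hmu j
  have hlam_j := hbd j.rev
  have hrev := Fin.val_rev j
  show n ≤ (posIdx n k hk lam a : ℕ) + posIdx n k hk mu j + 1
  simp only [val_posIdx] at hle ⊢
  omega

end Schubert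

theorem schubert_inter_opposite_nonempty_iff_general (n k : ℕ) (hkn : k ≤ n)
    (lam mu : Fin k → ℕ)
    (hlam_anti : ∀ i j : Fin k, i ≤ j → lam j ≤ lam i)
    (hlam_bd : ∀ i, lam i ≤ n - k)
    (hmu_bd : ∀ i, mu i ≤ n - k) :
    (∃ L : Submodule ℂ (Fin n → ℂ),
        Module.finrank ℂ ↥L = k ∧
        inSchubert n k hkn (stdFlag n) lam L ∧
        inSchubert n k hkn (oppFlag n) mu L) ↔
      ∀ i : Fin k, lam i + mu i.rev ≤ n - k := by
  constructor
  · rintro ⟨L, hL, hstd, hopp⟩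
    exact add_le_of_inSchubert_stdFlag_oppFlag hL hstd hopp hlam_bd hmu_bd
  · intro hsum
    exact ⟨coordE n k hkn lam, finrank_coordE hlam_anti hlam_bd,
      coordE_inSchubert_stdFlag hlam_anti hlam_bd,
      coordE_inSchubert_oppFlag hlam_anti hlam_bd hmu_bd hsum⟩

/-- For partitions `lam`, `mu` in the `k × (n-k)` box, the intersection
`Ω_lam(F) ∩ Ω_mu(F̃)` of the Schubert varieties for the standard flag `F` and the
opposite flag `F̃` is nonempty iff `lam i + mu (k+1-i) ≤ n - k` for all `i`
(equivalently, iff the Young diagram of `lam` is contained in that of `mu^∨`). -/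
theorem schubert_inter_opposite_nonempty_iff (n k : ℕ) (hk1 : 1 ≤ k) (hkn : k ≤ n)
    (lam mu : Fin k → ℕ)
    (hlam_anti : ∀ i j : Fin k, i ≤ j → lam j ≤ lam i)
    (hlam_bd : ∀ i, lam i ≤ n - k)
    (hmu_anti : ∀ i j : Fin k, i ≤ j → mu j ≤ mu i)
    (hmu_bd : ∀ i, mu i ≤ n - k) :
    (∃ L : Submodule ℂ (Fin n → ℂ),
        Module.finrank ℂ ↥L = k ∧
        inSchubert n k hkn (stdFlag n) lam L ∧
        inSchubert n k hkn (oppFlag n) mu L) ↔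
      ∀ i : Fin k, lam i + mu i.rev ≤ n - k :=
  schubert_inter_opposite_nonempty_iff_general n k hkn lam mu hlam_anti hlam_bd hmu_bd
end

section
/- (Buch's kernel bound.) Fix integers 1 ≤ k ≤ n and d ≥ 0. Let M be an n×k matrix with entries in the polynomial ring ℂ[t] such that for every t ∈ ℂ the evaluated matrix M(t) has rank k, and such that every k×k minor of M (a polynomial in t) has degree at most d. For t ∈ ℂ let L(t) ⊆ ℂ^n be the column span of M(t), a k-dimensional subspace. Then the intersection K = ⋂_{t ∈ ℂ} L(t) satisfies dim K + d ≥ k, i.e. dim K ≥ k − d. -/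
/-!
Column reduction of polynomial matrices. Multiplying `M` on the right by a matrix `E` that is
invertible over `ℂ[t]` changes neither the spaces `L(t)` nor, up to a nonzero constant factor,
the maximal minors. Let `dⱼ` be the degree of column `j` and collect the coefficients of `t ^ dⱼ`
into the leading coefficient matrix. If its columns are dependent, a suitable `E` lowers `∑ dⱼ`;
so we may assume they are independent. Then some maximal minor has degree exactly `∑ dⱼ`, hence
`∑ dⱼ ≤ d`, and at least `k - d` columns have degree `0`. These columns are constant, so they lie
in every `L(t)`, and they are linearly independent.
-/

open Polynomial

namespace Polynomial

variable {R : Type*}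

lemma coeff_prod_sum_of_natDegree_le [CommSemiring R] {ι : Type*} (s : Finset ι) (f : ι → R[X])
    (e : ι → ℕ) (h : ∀ i ∈ s, (f i).natDegree ≤ e i) :
    (∏ i ∈ s, f i).coeff (∑ i ∈ s, e i) = ∏ i ∈ s, (f i).coeff (e i) := by
  induction s using Finset.cons_induction with
  | empty => simp
  | cons a s ha ih =>
    rw [Finset.forall_mem_cons] at h
    rw [Finset.prod_cons, Finset.sum_cons, Finset.prod_cons,
      coeff_mul_add_eq_of_natDegree_le h.1 ((natDegree_prod_le s f).trans (Finset.sum_le_sum h.2)),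
      ih h.2]

lemma natDegree_sum_mul_C_mul_X_pow_lt [CommSemiring R] {ι : Type*} (s : Finset ι) (f : ι → R[X])
    (a : ι → R) (e : ι → ℕ) {N : ℕ} (hN : 0 < N) (hf : ∀ i ∈ s, (f i).natDegree ≤ e i)
    (he : ∀ i ∈ s, a i ≠ 0 → e i ≤ N) (hsum : ∑ i ∈ s, a i * (f i).coeff (e i) = 0) :
    (∑ i ∈ s, f i * (C (a i) * X ^ (N - e i))).natDegree < N := by
  have hterm : ∀ i ∈ s, ∀ k, N ≤ k →
      (f i * (C (a i) * X ^ (N - e i))).coeff k = a i * (f i).coeff (e i + (k - N)) := by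
    intro i hi k hk
    rw [← mul_assoc, coeff_mul_X_pow', coeff_mul_C]
    rcases eq_or_ne (a i) 0 with ha | ha
    · simp [ha]
    · have := he i hi ha
      rw [if_pos (by omega), mul_comm]
      congr 2
      omega
  have hdeg : (∑ i ∈ s, f i * (C (a i) * X ^ (N - e i))).degree < ↑N := by
    rw [degree_lt_iff_coeff_zero]
    intro k hk
    rw [finsetSum_coeff, Finset.sum_congr rfl fun i hi => hterm i hi k hk]
    rcases hk.eq_or_lt with rfl | hlt
    · simpa using hsum
    · refine Finset.sum_eq_zero fun i hi => ?_
      rw [coeff_eq_zero_of_natDegree_lt (by have := hf i hi; omega), mul_zero]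
  rcases eq_or_ne (∑ i ∈ s, f i * (C (a i) * X ^ (N - e i))) 0 with h0 | h0
  · rwa [h0, natDegree_zero]
  · exact (natDegree_lt_iff_degree_lt h0).2 hdeg

end Polynomial

namespace Matrix

variable {R F : Type*} {m n : Type*}

section Semiring

variable [Semiring R] [Fintype m]

noncomputable def colDegree (M : Matrix m n R[X]) (j : n) : ℕ :=
  Finset.univ.sup fun i => (M i j).natDegree

noncomputable def leadingColCoeff (M : Matrix m n R[X]) : Matrix m n R :=
  of fun i j => (M i j).coeff (M.colDegree j)

lemma natDegree_le_colDegree (M : Matrix m n R[X]) (i : m) (j : n) :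
    (M i j).natDegree ≤ M.colDegree j :=
  Finset.le_sup (f := fun i => (M i j).natDegree) (Finset.mem_univ i)

lemma eval_eq_leadingColCoeff_of_colDegree_eq_zero {M : Matrix m n R[X]} {j : n}
    (h : M.colDegree j = 0) (i : m) (t : R) : (M i j).eval t = M.leadingColCoeff i j := by
  have := M.natDegree_le_colDegree i j
  rw [leadingColCoeff, of_apply, h, eq_C_of_natDegree_eq_zero (p := M i j) (by omega), eval_C,
    coeff_C_zero]

lemma sum_colDegree_updateCol_lt [Fintype n] [DecidableEq n] (M : Matrix m n R[X]) {j : n}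
    {c : m → R[X]} (hpos : 0 < M.colDegree j) (hc : ∀ i, (c i).natDegree < M.colDegree j) :
    ∑ j', (M.updateCol j c).colDegree j' < ∑ j', M.colDegree j' := by
  have hj : (M.updateCol j c).colDegree j < M.colDegree j := by
    refine (Finset.sup_lt_iff hpos).2 fun i _ => ?_
    rw [updateCol_self]
    exact hc i
  refine Finset.sum_lt_sum (fun j' _ => ?_) ⟨j, Finset.mem_univ j, hj⟩
  rcases eq_or_ne j' j with rfl | hj'
  · exact hj.le
  · simp [colDegree, updateCol_ne hj']

end Semiring

section CommRing

variable [CommRing R] [Fintype n]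

lemma map_eval_mul_eq (M : Matrix m n R[X]) (E : Matrix n n R[X]) (t : R) :
    (M * E).map (eval t) = M.map (eval t) * E.map (eval t) :=
  Matrix.map_mul (f := evalRingHom t)

variable [DecidableEq n]

lemma coeff_det_sum_of_natDegree_le (A : Matrix n n R[X]) (e : n → ℕ)
    (h : ∀ i j, (A i j).natDegree ≤ e j) :
    A.det.coeff (∑ j, e j) = (of fun i j => (A i j).coeff (e j)).det := by
  simp only [det_apply', finsetSum_coeff]
  refine Finset.sum_congr rfl fun σ _ => ?_
  rw [← C_eq_intCast, coeff_C_mul, coeff_prod_sum_of_natDegree_le _ _ _ fun i _ => h (σ i) i]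
  rfl

lemma span_col_mul_of_isUnit (A : Matrix m n R) {B : Matrix n n R} (hB : IsUnit B) :
    Submodule.span R (Set.range (A * B).col) = Submodule.span R (Set.range A.col) := by
  rw [← range_mulVecLin, ← range_mulVecLin, mulVecLin_mul, LinearMap.range_comp_of_range_eq_top]
  exact LinearMap.range_eq_top.2 (mulVec_surjective_iff_isUnit.2 hB)

lemma linearIndependent_col_mul_of_isUnit (A : Matrix m n R) {B : Matrix n n R} (hB : IsUnit B) :
    LinearIndependent R (A * B).col ↔ LinearIndependent R A.col := by
  have hcomp : (A * B).mulVec = A.mulVec ∘ B.mulVec := funext fun v => (mulVec_mulVec v A B).symm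
  rw [← mulVec_injective_iff, ← mulVec_injective_iff, hcomp]
  exact Function.Injective.of_comp_iff' _
    ⟨mulVec_injective_of_isUnit hB, mulVec_surjective_iff_isUnit.2 hB⟩

lemma isUnit_map_eval {E : Matrix n n R[X]} (hE : IsUnit E) (t : R) : IsUnit (E.map (eval t)) :=
  hE.map (evalRingHom t).mapMatrix

lemma span_col_map_eval_mul_of_isUnit (M : Matrix m n R[X]) {E : Matrix n n R[X]} (hE : IsUnit E)
    (t : R) : Submodule.span R (Set.range ((M * E).map (eval t)).col) =
      Submodule.span R (Set.range (M.map (eval t)).col) := by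
  rw [map_eval_mul_eq]
  exact span_col_mul_of_isUnit _ (isUnit_map_eval hE t)

lemma linearIndependent_col_map_eval_mul_of_isUnit (M : Matrix m n R[X]) {E : Matrix n n R[X]}
    (hE : IsUnit E) (t : R) :
    LinearIndependent R ((M * E).map (eval t)).col ↔ LinearIndependent R (M.map (eval t)).col := by
  rw [map_eval_mul_eq]
  exact linearIndependent_col_mul_of_isUnit _ (isUnit_map_eval hE t)

lemma natDegree_det_submatrix_mul_le [IsDomain R] (M : Matrix m n R[X]) {E : Matrix n n R[X]}
    (hE : IsUnit E) (g : n → m) :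
    ((M * E).submatrix g id).det.natDegree ≤ (M.submatrix g id).det.natDegree := by
  rw [submatrix_mul _ _ _ _ id Function.bijective_id, submatrix_id_id, det_mul]
  refine natDegree_mul_le.trans ?_
  rw [natDegree_eq_zero_of_isUnit ((isUnit_iff_isUnit_det E).1 hE), add_zero]

end CommRing

section Field

variable [Field F] [Fintype n]

lemma linearIndependent_col_iff_rank_eq {A : Matrix m n F} :
    LinearIndependent F A.col ↔ A.rank = Fintype.card n := by
  rw [linearIndependent_iff_card_eq_finrank_span, rank_eq_finrank_span_cols, Set.finrank, eq_comm]

variable [Fintype m]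

theorem card_le_finrank_iInf_span_col_add_sum_colDegree (M : Matrix m n F[X]) {t₀ : F}
    (h₀ : LinearIndependent F (M.map (eval t₀)).col) :
    Fintype.card n ≤ Module.finrank F ↥(⨅ t, Submodule.span F (Set.range (M.map (eval t)).col))
      + ∑ j, M.colDegree j := by
  set S := Finset.univ.filter fun j => M.colDegree j = 0
  have hcount : Fintype.card n ≤ S.card + ∑ j, M.colDegree j := by
    rw [Finset.card_filter, ← Finset.sum_add_distrib, Fintype.card_eq_sum_ones]
    exact Finset.sum_le_sum fun j _ => by split_ifs <;> omega
  have hconst : ∀ j ∈ S, ∀ t, (M.map (eval t)).col j = (M.map (eval t₀)).col j := by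
    intro j hj t
    funext i
    have hj := (Finset.mem_filter.1 hj).2
    simp only [col_apply, map_apply, eval_eq_leadingColCoeff_of_colDegree_eq_zero hj]
  have hS :
      S.card ≤ Module.finrank F ↥(⨅ t, Submodule.span F (Set.range (M.map (eval t)).col)) := by
    have hli : LinearIndependent F fun j : S => (M.map (eval t₀)).col j :=
      h₀.comp _ Subtype.val_injective
    rw [← Fintype.card_coe, ← finrank_span_eq_card hli]
    refine Submodule.finrank_mono (Submodule.span_le.2 ?_)
    rintro _ ⟨j, rfl⟩
    rw [SetLike.mem_coe, Submodule.mem_iInf]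
    intro t
    have hmem := Submodule.subset_span (R := F) (Set.mem_range_self (f := (M.map (eval t)).col) j.1)
    rwa [hconst j j.2 t] at hmem
  omega

variable [DecidableEq n]

lemma exists_det_submatrix_ne_zero_of_linearIndependent_col {A : Matrix m n F}
    (hA : LinearIndependent F A.col) :
    ∃ g : n → m, Function.Injective g ∧ (A.submatrix g id).det ≠ 0 := by
  obtain ⟨κ, a, ha, hspan, hli⟩ := exists_linearIndependent' F A.row
  have : Finite κ := Finite.of_injective a ha
  have : Fintype κ := Fintype.ofFinite κ
  have hcard : Fintype.card n = Fintype.card κ := by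
    rw [← linearIndependent_col_iff_rank_eq.1 hA, rank_eq_finrank_span_row, ← hspan,
      finrank_span_eq_card hli]
  obtain e := Fintype.equivOfCardEq hcard
  refine ⟨a ∘ e, ha.comp e.injective, ?_⟩
  rw [← isUnit_iff_ne_zero, ← isUnit_iff_isUnit_det, ← linearIndependent_rows_iff_isUnit]
  exact hli.comp e e.injective

lemma exists_sum_colDegree_le_natDegree_det_submatrix {M : Matrix m n F[X]}
    (h : LinearIndependent F M.leadingColCoeff.col) :
    ∃ g : n → m, Function.Injective g ∧ ∑ j, M.colDegree j ≤ (M.submatrix g id).det.natDegree := by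
  obtain ⟨g, hg, hdet⟩ := exists_det_submatrix_ne_zero_of_linearIndependent_col h
  refine ⟨g, hg, le_natDegree_of_ne_zero ?_⟩
  rwa [coeff_det_sum_of_natDegree_le (M.submatrix g id) M.colDegree
    fun i j => M.natDegree_le_colDegree (g i) j]

lemma exists_isUnit_sum_colDegree_mul_lt (M : Matrix m n F[X]) {t₀ : F}
    (h₀ : LinearIndependent F (M.map (eval t₀)).col)
    (hlead : ¬ LinearIndependent F M.leadingColCoeff.col) :
    ∃ E : Matrix n n F[X], IsUnit E ∧ ∑ j, (M * E).colDegree j < ∑ j, M.colDegree j := by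
  classical
  obtain ⟨w, hw, j₁, hj₁⟩ := Fintype.not_linearIndependent_iff.1 hlead
  obtain ⟨j₀, hj₀, hmax⟩ :=
    Finset.exists_max_image {j | w j ≠ 0} M.colDegree ⟨j₁, by simpa using hj₁⟩
  simp only [Finset.mem_filter, Finset.mem_univ, true_and] at hj₀ hmax
  -- otherwise `w` would be a relation among the columns of `M(t₀)`
  have hpos : 0 < M.colDegree j₀ := by
    by_contra! hzero
    have hconst : ∀ j, w j ≠ 0 → (M.map (eval t₀)).col j = M.leadingColCoeff.col j :=
      fun j hj => funext fun i =>
        eval_eq_leadingColCoeff_of_colDegree_eq_zero (by have := hmax j hj; omega) i t₀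
    refine hj₁ (Fintype.linearIndependent_iff.1 h₀ w ?_ j₁)
    rw [← hw]
    refine Finset.sum_congr rfl fun j _ => ?_
    rcases eq_or_ne (w j) 0 with hj | hj
    · simp [hj]
    · rw [hconst j hj]
  -- replace column `j₀` by `∑ⱼ wⱼ X ^ (d_{j₀} - dⱼ) Mⱼ`: its coefficient of `X ^ d_{j₀}` is the
  -- relation `∑ⱼ wⱼ (leadingColCoeff M).col j = 0`
  set v : n → F[X] := fun j => C (w j) * X ^ (M.colDegree j₀ - M.colDegree j)
  have hdet : (updateCol 1 j₀ v).det = C (w j₀) := by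
    rw [← cramer_apply, cramer_one]
    simp [v]
  refine ⟨updateCol 1 j₀ v, ?_, ?_⟩
  · rw [isUnit_iff_isUnit_det, hdet]
    exact isUnit_C.2 (isUnit_iff_ne_zero.2 hj₀)
  rw [mul_updateCol, Matrix.mul_one]
  refine M.sum_colDegree_updateCol_lt hpos fun i => ?_
  refine natDegree_sum_mul_C_mul_X_pow_lt _ _ _ _ hpos (fun j _ => M.natDegree_le_colDegree i j)
    (fun j _ hj => hmax j hj) ?_
  simpa [Finset.sum_apply, leadingColCoeff] using congr_fun hw i

theorem exists_isUnit_linearIndependent_leadingColCoeff_mul (M : Matrix m n F[X]) {t₀ : F}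
    (h₀ : LinearIndependent F (M.map (eval t₀)).col) :
    ∃ E : Matrix n n F[X], IsUnit E ∧ LinearIndependent F (M * E).leadingColCoeff.col := by
  by_cases hlead : LinearIndependent F M.leadingColCoeff.col
  · exact ⟨1, isUnit_one, by rwa [Matrix.mul_one]⟩
  obtain ⟨E₁, hE₁, hlt⟩ := M.exists_isUnit_sum_colDegree_mul_lt h₀ hlead
  obtain ⟨E₂, hE₂, hli⟩ := (M * E₁).exists_isUnit_linearIndependent_leadingColCoeff_mul
    ((M.linearIndependent_col_map_eval_mul_of_isUnit hE₁ t₀).2 h₀)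
  exact ⟨E₁ * E₂, hE₁.mul hE₂, by rwa [← Matrix.mul_assoc]⟩
termination_by ∑ j, M.colDegree j

end Field

end Matrix

open Polynomial in
theorem buch_kernel_bound_general (n k : ℕ) (d : ℕ)
    (M : Matrix (Fin n) (Fin k) ℂ[X])
    (hrank : ∀ t : ℂ, (M.map (Polynomial.eval t)).rank = k)
    (hdeg : ∀ g : Fin k → Fin n, Function.Injective g →
      ((M.submatrix g id).det).natDegree ≤ d) :
    k ≤ Module.finrank ℂ
        ↥(⨅ t : ℂ, Submodule.span ℂ
            (Set.range fun j : Fin k => fun i : Fin n => (M i j).eval t)) + d := by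
  have hli : ∀ t : ℂ, LinearIndependent ℂ (M.map (eval t)).col := fun t =>
    Matrix.linearIndependent_col_iff_rank_eq.2 (by simpa using hrank t)
  obtain ⟨E, hE, hlead⟩ := M.exists_isUnit_linearIndependent_leadingColCoeff_mul (hli 0)
  obtain ⟨g, hg, hsum⟩ := Matrix.exists_sum_colDegree_le_natDegree_det_submatrix hlead
  have hminor := (M.natDegree_det_submatrix_mul_le hE g).trans (hdeg g hg)
  have hbound := (M * E).card_le_finrank_iInf_span_col_add_sum_colDegree
    ((M.linearIndependent_col_map_eval_mul_of_isUnit hE 0).2 (hli 0))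
  rw [iInf_congr (M.span_col_map_eval_mul_of_isUnit hE), Fintype.card_fin] at hbound
  exact hbound.trans (Nat.add_le_add_left (hsum.trans hminor) _)

open Polynomial in
/-- **Buch's kernel bound.** Let `M` be an `n × k` matrix over `ℂ[t]` such that `M(t)`
has rank `k` for every `t ∈ ℂ` and every `k × k` minor of `M` has degree at most `d`
(so `M` encodes a morphism `f : ℙ¹ → Gr(k,n)` of degree at most `d`, with `f(t)` the
column span `L(t)` of `M(t)`). Then the intersection `K = ⋂_t L(t)` of all these
`k`-dimensional subspaces satisfies `dim K ≥ k - d`, i.e. `dim K + d ≥ k`. -/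
theorem buch_kernel_bound (n k : ℕ) (hk1 : 1 ≤ k) (hkn : k ≤ n) (d : ℕ)
    (M : Matrix (Fin n) (Fin k) ℂ[X])
    (hrank : ∀ t : ℂ, (M.map (Polynomial.eval t)).rank = k)
    (hdeg : ∀ g : Fin k → Fin n, Function.Injective g →
      ((M.submatrix g id).det).natDegree ≤ d) :
    k ≤ Module.finrank ℂ
        ↥(⨅ t : ℂ, Submodule.span ℂ
            (Set.range fun j : Fin k => fun i : Fin n => (M i j).eval t)) + d :=
  buch_kernel_bound_general n k d M hrank hdeg
end
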